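/- Let p ∈ (0,1), φ ∈ [0,2π), and let |ψ⟩ = √p |0⟩ + e^{iφ} √(1−p) |1⟩ be a qubit state, Δp = 2p−1. Then for every n ≥ 1, the ℤ₂-twirling of the n-fold tensor power satisfies Z[(|ψ⟩⟨ψ|)^{⊗n}] = ((1+Δp^n)/2) |0_p⟩⟨0_p| + ((1−Δp^n)/2) |1_p⟩⟨1_p|, where |0_p⟩ and |1_p⟩ are the normalized even- and odd-parity components of |ψ⟩^{⊗n}, explicitly |0_p⟩ = Σ_{j even} e^{ijφ} √( C(n,j) p^{n−j}(1−p)^j / (½(1+Δp^n)) ) |v_j⟩ and |1_p⟩ = Σ_{j odd} e^{ijφ} √( C(n,j) p^{n−j}(1−p)^j / (½(1−Δp^n)) ) |v_j⟩, with |v_j⟩ = C(n,j)^{−1/2} Σ |0⟩^{⊗(n−j)}|1⟩^{⊗j} summed over all arrangements of positions. -/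
import Mathlib


open Matrix Complex Set Filter

noncomputable section

/-- Number of 1s in a bit string. -/
def ones {n : ℕ} (x : Fin n → Fin 2) : ℕ := (Finset.univ.filter fun i => x i = 1).card

/-- The `n`-fold tensor power of a one-qubit operator, as a matrix indexed by bit strings. -/
def mpow (n : ℕ) (ρ : Matrix (Fin 2) (Fin 2) ℂ) :
    Matrix (Fin n → Fin 2) (Fin n → Fin 2) ℂ :=
  Matrix.of fun x y => ∏ i, ρ (x i) (y i)

/-- The parity operator ω = σ_z^{⊗n}: it multiplies a computational basis vector by
(-1)^(number of 1s). -/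
def parityOp (n : ℕ) : Matrix (Fin n → Fin 2) (Fin n → Fin 2) ℂ :=
  Matrix.diagonal fun x => (-1 : ℂ) ^ ones x

/-- The ℤ₂-twirling Z[X] = ½ (X + ωXω). -/
def twirl {n : ℕ} (X : Matrix (Fin n → Fin 2) (Fin n → Fin 2) ℂ) :
    Matrix (Fin n → Fin 2) (Fin n → Fin 2) ℂ :=
  (2 : ℂ)⁻¹ • (X + parityOp n * X * parityOp n)

/-- Rank-one projection |ψ⟩⟨ψ| on one qubit. -/
def projv (ψ : Fin 2 → ℂ) : Matrix (Fin 2) (Fin 2) ℂ := vecMulVec ψ (star ψ)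

/-- Rank-one projection |ψ⟩⟨ψ| on n qubits. -/
def projN {n : ℕ} (ψ : (Fin n → Fin 2) → ℂ) :
    Matrix (Fin n → Fin 2) (Fin n → Fin 2) ℂ := vecMulVec ψ (star ψ)

def ket0 : Fin 2 → ℂ := ![1, 0]

def ket1 : Fin 2 → ℂ := ![0, 1]

/-- The qubit state √p |0⟩ + e^{iφ} √(1-p) |1⟩. -/
def qubit (p φ : ℝ) : Fin 2 → ℂ :=
  ![(Real.sqrt p : ℂ), Complex.exp (Complex.I * φ) * (Real.sqrt (1 - p) : ℂ)]

/-- The qubit state √p |0⟩ + √(1-p) |1⟩. -/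
def qubitR (p : ℝ) : Fin 2 → ℂ := ![(Real.sqrt p : ℂ), (Real.sqrt (1 - p) : ℂ)]

/-- |v_j⟩ = C(n,j)^{-1/2} Σ |0⟩^{⊗(n-j)}|1⟩^{⊗j}, the sum over all arrangements of
bit strings with exactly j ones. -/
def vJ (n j : ℕ) : (Fin n → Fin 2) → ℂ :=
  fun x => if ones x = j then ((Real.sqrt (n.choose j) : ℂ))⁻¹ else 0

/-- The normalized even-parity component |0_p⟩ of (√p|0⟩ + e^{iφ}√(1-p)|1⟩)^{⊗n}:
|0_p⟩ = Σ_{j even} e^{ijφ} √( C(n,j) p^{n−j}(1−p)^j / (½(1+(2p-1)^n)) ) |v_j⟩. -/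
def evenVec (n : ℕ) (p φ : ℝ) : (Fin n → Fin 2) → ℂ :=
  ∑ j ∈ (Finset.range (n + 1)).filter (fun j => Even j),
    (Complex.exp (Complex.I * φ * j) *
      (Real.sqrt ((n.choose j : ℝ) * p ^ (n - j) * (1 - p) ^ j /
        ((1 + (2 * p - 1) ^ n) / 2)) : ℂ)) • vJ n j

/-- The normalized odd-parity component |1_p⟩ of (√p|0⟩ + e^{iφ}√(1-p)|1⟩)^{⊗n}:
|1_p⟩ = Σ_{j odd} e^{ijφ} √( C(n,j) p^{n−j}(1−p)^j / (½(1-(2p-1)^n)) ) |v_j⟩. -/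
def oddVec (n : ℕ) (p φ : ℝ) : (Fin n → Fin 2) → ℂ :=
  ∑ j ∈ (Finset.range (n + 1)).filter (fun j => Odd j),
    (Complex.exp (Complex.I * φ * j) *
      (Real.sqrt ((n.choose j : ℝ) * p ^ (n - j) * (1 - p) ^ j /
        ((1 - (2 * p - 1) ^ n) / 2)) : ℂ)) • vJ n j

/-- For p ∈ (0,1), φ ∈ [0,2π) and n ≥ 1, the ℤ₂-twirling of the n-fold
tensor power of |ψ⟩⟨ψ| for |ψ⟩ = √p|0⟩ + e^{iφ}√(1-p)|1⟩ is
Z[(|ψ⟩⟨ψ|)^{⊗n}] = ((1+Δp^n)/2)|0_p⟩⟨0_p| + ((1−Δp^n)/2)|1_p⟩⟨1_p|, Δp = 2p-1. -/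
lemma my_sqrt_pow (x : ℝ) (hx : 0 ≤ x) (n : ℕ) : Real.sqrt (x ^ n) = Real.sqrt x ^ n := by
  induction n with
  | zero => simp
  | succ k ih => rw [pow_succ, pow_succ, Real.sqrt_mul (pow_nonneg hx k), ih]

lemma ones_le {n : ℕ} (x : Fin n → Fin 2) : ones x ≤ n := by
  classical
  simpa [ones] using Finset.card_filter_le Finset.univ (fun i => x i = 1)

lemma prod_qubit {n : ℕ} (p φ : ℝ) (hp0 : 0 ≤ p) (hp1 : p ≤ 1) (x : Fin n → Fin 2) :
    ∏ i, qubit p φ (x i) =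
      Complex.exp (Complex.I * φ * (ones x : ℕ)) *
        ((Real.sqrt (p ^ (n - ones x) * (1 - p) ^ ones x) : ℝ) : ℂ) := by
  classical
  have hq : ∀ v : Fin 2, qubit p φ v =
      if v = 1 then Complex.exp (Complex.I * φ) * (Real.sqrt (1 - p) : ℂ)
      else (Real.sqrt p : ℂ) := by
    intro v; fin_cases v <;> simp [qubit]
  have hcard : (Finset.univ.filter fun i : Fin n => ¬ x i = 1).card = n - ones x := by
    have h := Finset.card_filter_add_card_filter_not
      (s := (Finset.univ : Finset (Fin n))) (fun i => x i = 1)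
    simp only [Finset.card_univ, Fintype.card_fin] at h
    have hle := ones_le x
    unfold ones at *
    omega
  calc ∏ i, qubit p φ (x i)
      = ∏ i, (if x i = 1 then Complex.exp (Complex.I * φ) * (Real.sqrt (1 - p) : ℂ)
          else (Real.sqrt p : ℂ)) := by simp only [hq]
    _ = (Complex.exp (Complex.I * φ) * (Real.sqrt (1 - p) : ℂ)) ^ ones x *
          ((Real.sqrt p : ℂ)) ^ (n - ones x) := by
        rw [Finset.prod_ite, Finset.prod_const, Finset.prod_const, hcard]; rfl
    _ = _ := by
        rw [mul_pow, ← Complex.exp_nat_mul]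
        have h1 : ((Real.sqrt (1 - p) : ℂ)) ^ ones x
            = ((Real.sqrt ((1-p) ^ ones x) : ℝ) : ℂ) := by
          rw [my_sqrt_pow (1-p) (by linarith)]; push_cast; ring
        have h2 : ((Real.sqrt p : ℂ)) ^ (n - ones x)
            = ((Real.sqrt (p ^ (n - ones x)) : ℝ) : ℂ) := by
          rw [my_sqrt_pow p hp0]; push_cast; ring
        rw [h1, h2]
        rw [show Complex.I * (φ:ℂ) * (ones x : ℕ) = (ones x : ℕ) * (Complex.I * φ) by ring]
        rw [Real.sqrt_mul (pow_nonneg hp0 _) ((1-p) ^ ones x)]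
        push_cast
        ring

lemma sum_vJ_apply (n : ℕ) (S : Finset ℕ) (c : ℕ → ℂ) (x : Fin n → Fin 2) :
    (∑ j ∈ S, c j • vJ n j) x =
      if ones x ∈ S then c (ones x) * ((Real.sqrt ((n.choose (ones x) : ℕ)) : ℂ))⁻¹ else 0 := by
  classical
  have h : ∀ j, (c j • vJ n j) x
      = if ones x = j then c j * ((Real.sqrt ((n.choose j : ℕ)) : ℂ))⁻¹ else 0 := by
    intro j
    simp only [Pi.smul_apply, vJ, smul_eq_mul]
    split <;> simp
  rw [Finset.sum_apply]
  simp only [h]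
  exact Finset.sum_ite_eq S (ones x) _

lemma component_apply (n : ℕ) (p : ℝ) (E : ℝ) (hE : 0 < E) (φ : ℝ)
    (Q : ℕ → Prop) [DecidablePred Q] (x : Fin n → Fin 2) :
    (∑ j ∈ (Finset.range (n + 1)).filter (fun j => Q j),
      (Complex.exp (Complex.I * φ * j) *
        (Real.sqrt ((n.choose j : ℝ) * p ^ (n - j) * (1 - p) ^ j / E) : ℂ)) • vJ n j) x =
      if Q (ones x) then
        Complex.exp (Complex.I * φ * (ones x : ℕ)) *
          ((Real.sqrt (p ^ (n - ones x) * (1 - p) ^ ones x / E) : ℝ) : ℂ)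
      else 0 := by
  classical
  rw [sum_vJ_apply]
  have hmem : ones x ∈ (Finset.range (n+1)).filter (fun j => Q j) ↔ Q (ones x) := by
    simp [Finset.mem_filter, Finset.mem_range, Nat.lt_succ_iff, ones_le x]
  by_cases hQ : Q (ones x)
  · rw [if_pos (hmem.mpr hQ), if_pos hQ]
    set a := ones x
    have hC : (0:ℝ) < (n.choose a : ℝ) := by exact_mod_cast Nat.choose_pos (ones_le x)
    have hrw : (n.choose a : ℝ) * p ^ (n-a) * (1-p) ^ a / E
        = (n.choose a : ℝ) * (p ^ (n-a) * (1-p) ^ a / E) := by ring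
    rw [hrw, Real.sqrt_mul hC.le]
    have hs : ((Real.sqrt ((n.choose a : ℕ)) : ℝ) : ℂ) ≠ 0 := by
      simp only [Complex.ofReal_ne_zero]
      positivity
    have he : ((Real.sqrt E : ℝ) : ℂ) ≠ 0 := by
      simp only [Complex.ofReal_ne_zero]
      positivity
    push_cast
    field_simp
  · rw [if_neg (fun hh => hQ (hmem.mp hh)), if_neg hQ]

lemma key_sqrt (E ta tb : ℝ) (hE : 0 < E) (hta : 0 ≤ ta) (htb : 0 ≤ tb) :
    (E : ℂ) * ((Real.sqrt (ta / E) : ℂ) * (Real.sqrt (tb / E) : ℂ))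
      = (Real.sqrt ta : ℂ) * (Real.sqrt tb : ℂ) := by
  have h : E * (Real.sqrt (ta / E) * Real.sqrt (tb / E)) = Real.sqrt ta * Real.sqrt tb := by
    rw [Real.sqrt_div hta, Real.sqrt_div htb, div_mul_div_comm, Real.mul_self_sqrt hE.le]
    field_simp
  calc (E : ℂ) * ((Real.sqrt (ta / E) : ℂ) * (Real.sqrt (tb / E) : ℂ))
      = ((E * (Real.sqrt (ta / E) * Real.sqrt (tb / E)) : ℝ) : ℂ) := by push_cast; ring
    _ = _ := by rw [h]; push_cast; ring

theorem z2_twirl_pure_power (p φ : ℝ) (hp : p ∈ Set.Ioo (0 : ℝ) 1)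
    (hφ : φ ∈ Set.Ico (0 : ℝ) (2 * Real.pi)) (n : ℕ) (hn : 1 ≤ n) :
    twirl (mpow n (projv (qubit p φ))) =
      (((1 + (2 * p - 1) ^ n) / 2 : ℝ) : ℂ) • projN (evenVec n p φ) +
      (((1 - (2 * p - 1) ^ n) / 2 : ℝ) : ℂ) • projN (oddVec n p φ) := by
  classical
  obtain ⟨hp0, hp1⟩ := hp
  have habs : |2*p-1| < 1 := abs_lt.mpr ⟨by linarith, by linarith⟩
  have habsn : |(2*p-1)^n| < 1 := by
    rw [_root_.abs_pow]; exact pow_lt_one₀ (abs_nonneg _) habs (by omega)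
  obtain ⟨hn1, hn2⟩ := abs_lt.mp habsn
  have hE : (0:ℝ) < (1 + (2*p-1)^n)/2 := by linarith
  have hO : (0:ℝ) < (1 - (2*p-1)^n)/2 := by linarith
  have h1p : (0:ℝ) < 1 - p := by linarith
  ext x y
  have hxa := ones_le x
  have hyb := ones_le y
  have hta : (0:ℝ) ≤ p ^ (n - ones x) * (1-p) ^ ones x := by positivity
  have htb : (0:ℝ) ≤ p ^ (n - ones y) * (1-p) ^ ones y := by positivity
  have hL : twirl (mpow n (projv (qubit p φ))) x y =
      (2:ℂ)⁻¹ * (1 + (-1)^(ones x) * (-1)^(ones y)) *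
        ((Complex.exp (Complex.I * φ * (ones x : ℕ)) *
            ((Real.sqrt (p ^ (n - ones x) * (1-p) ^ ones x) : ℝ) : ℂ)) *
         (starRingEnd ℂ) (Complex.exp (Complex.I * φ * (ones y : ℕ)) *
            ((Real.sqrt (p ^ (n - ones y) * (1-p) ^ ones y) : ℝ) : ℂ))) := by
    have hm : mpow n (projv (qubit p φ)) x y =
        (∏ i, qubit p φ (x i)) * (starRingEnd ℂ) (∏ i, qubit p φ (y i)) := by
      simp only [mpow, Matrix.of_apply, projv, Matrix.vecMulVec_apply, Pi.star_apply,
        Complex.star_def]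
      rw [Finset.prod_mul_distrib, map_prod]
    simp only [twirl, Matrix.smul_apply, Matrix.add_apply, parityOp, Matrix.mul_diagonal,
      Matrix.diagonal_mul, smul_eq_mul]
    rw [hm, prod_qubit p φ hp0.le hp1.le x, prod_qubit p φ hp0.le hp1.le y]
    ring
  rw [hL]
  simp only [Matrix.add_apply, Matrix.smul_apply, projN, Matrix.vecMulVec_apply,
    Pi.star_apply, Complex.star_def, smul_eq_mul]
  rw [show evenVec n p φ = (∑ j ∈ (Finset.range (n + 1)).filter (fun j => Even j),
      (Complex.exp (Complex.I * φ * j) *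
        (Real.sqrt ((n.choose j : ℝ) * p ^ (n - j) * (1 - p) ^ j /
          ((1 + (2 * p - 1) ^ n) / 2)) : ℂ)) • vJ n j) from rfl]
  rw [show oddVec n p φ = (∑ j ∈ (Finset.range (n + 1)).filter (fun j => Odd j),
      (Complex.exp (Complex.I * φ * j) *
        (Real.sqrt ((n.choose j : ℝ) * p ^ (n - j) * (1 - p) ^ j /
          ((1 - (2 * p - 1) ^ n) / 2)) : ℂ)) • vJ n j) from rfl]
  rw [component_apply n p _ hE φ Even x, component_apply n p _ hE φ Even y,
    component_apply n p _ hO φ Odd x, component_apply n p _ hO φ Odd y]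
  rcases Nat.even_or_odd (ones x) with hA | hA <;>
    rcases Nat.even_or_odd (ones y) with hB | hB
  · rw [if_pos hA, if_pos hB, if_neg (Nat.not_odd_iff_even.mpr hA),
      if_neg (Nat.not_odd_iff_even.mpr hB)]
    rw [hA.neg_one_pow, hB.neg_one_pow]
    simp only [_root_.map_mul, Complex.conj_ofReal, mul_zero, zero_mul, add_zero]
    have key := key_sqrt _ _ _ hE hta htb
    linear_combination (-(Complex.exp (Complex.I * φ * (ones x : ℕ)) *
      (starRingEnd ℂ) (Complex.exp (Complex.I * φ * (ones y : ℕ))))) * key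
  · rw [if_pos hA, if_neg (Nat.not_even_iff_odd.mpr hB),
      if_neg (Nat.not_odd_iff_even.mpr hA), if_pos hB]
    rw [hA.neg_one_pow, hB.neg_one_pow]
    simp
  · rw [if_neg (Nat.not_even_iff_odd.mpr hA), if_pos hB,
      if_pos hA, if_neg (Nat.not_odd_iff_even.mpr hB)]
    rw [hA.neg_one_pow, hB.neg_one_pow]
    simp
  · rw [if_neg (Nat.not_even_iff_odd.mpr hA),
      if_neg (Nat.not_even_iff_odd.mpr hB), if_pos hA, if_pos hB]
    rw [hA.neg_one_pow, hB.neg_one_pow]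
    simp only [_root_.map_mul, Complex.conj_ofReal, mul_zero, zero_mul, add_zero, zero_add]
    have key := key_sqrt _ _ _ hO hta htb
    linear_combination (-(Complex.exp (Complex.I * φ * (ones x : ℕ)) *
      (starRingEnd ℂ) (Complex.exp (Complex.I * φ * (ones y : ℕ))))) * key
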